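/- Let G be a finite simple graph, T a spanning tree of G, and G̃ the lift of G with respect to T. If C̃ is a cycle in G̃, then in the subgraph of G whose edge set is the set of π-projections of the edges of C̃ (with their endpoints as vertices), every vertex has degree at least 2; consequently this subgraph contains a cycle of G. -/

import Mathlib

open SimpleGraph

noncomputable section
attribute [local instance] Classical.propDecidable

variable {V : Type*}

/-- The set `S` of edges of `G` not in the spanning tree `T`. -/
def nonTreeEdges (G T : SimpleGraph V) : Set (Sym2 V) := G.edgeSet \ T.edgeSet

/-- The lift `G̃` of `G` with respect to the spanning tree `T`: its vertices are the pairs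
`(u, f)` with `u ∈ V(G)` and `f : S → ZMod 2`; `(u,f)` is adjacent to `(v,g)` iff
`uv ∈ E(G)` and `g` agrees with `f` except that `g(uv) = f(uv) + 1` when `uv ∈ S`
(so `g = f` when `uv ∈ E(T)`). -/
def liftGraph (G T : SimpleGraph V) :
    SimpleGraph (V × (nonTreeEdges G T → ZMod 2)) where
  Adj p q := G.Adj p.1 q.1 ∧
    q.2 = fun e => p.2 e + (if (e : Sym2 V) = s(p.1, q.1) then 1 else 0)
  symm := ⟨by
    rintro p q ⟨hadj, hf⟩
    refine ⟨hadj.symm, ?_⟩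
    have key : ∀ a c : ZMod 2, a + c + c = a := by decide
    funext e
    have hs : s(q.1, p.1) = s(p.1, q.1) := Sym2.eq_swap
    rw [hs, hf]
    exact (key _ _).symm⟩
  loopless := ⟨fun p h => (G.ne_of_adj h.1) rfl⟩

/-- The projection `π : G̃ → G` on vertices, as a graph homomorphism. -/
def liftProj (G T : SimpleGraph V) : liftGraph G T →g G :=
  ⟨Prod.fst, fun h => And.left h⟩

/-- The projection `π` on edges of the lift. -/
def edgeProj (G T : SimpleGraph V) :
    Sym2 (V × (nonTreeEdges G T → ZMod 2)) → Sym2 V :=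
  Sym2.map Prod.fst

namespace LiftAux
open SimpleGraph

variable {W : Type*} {H : SimpleGraph W}

lemma firstEdge_mem {u v : W} (w : H.Walk u v) (h : ¬ w.Nil) :
    s(u, w.getVert 1) ∈ w.edges := by
  cases w with
  | nil => simp at h
  | cons h' p => simp [Walk.getVert_cons_succ]

lemma path_start_edge {u v : W} {w : H.Walk u v} (hw : w.IsPath) {y : W}
    (he : s(u, y) ∈ w.edges) : y = w.getVert 1 := by
  cases w with
  | nil => simp at he
  | @cons _ b _ h' p =>
    rw [Walk.edges_cons, List.mem_cons] at he
    rcases he with he | he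
    · have : y = b := Sym2.congr_right.mp he
      simpa [Walk.getVert_cons_succ] using this
    · exact absurd (Walk.fst_mem_support_of_mem_edges p he)
        ((Walk.cons_isPath_iff h' p).mp hw).2

lemma cycle_two_edges {x : W} {C : H.Walk x x} (hC : C.IsCycle) {p : W}
    (hp : p ∈ C.support) :
    ∃ a b : W, a ≠ b ∧ s(p, a) ∈ C.edges ∧ s(p, b) ∈ C.edges := by
  have hC2 := hC.rotate hp
  have h3 := hC2.three_le_length
  have hmem : ∀ e, e ∈ (C.rotate p hp).edges ↔ e ∈ C.edges :=
    fun e => (C.rotate_edges p hp).mem_iff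
  obtain ⟨a, hadj, q, hq⟩ := Walk.not_nil_iff.mp hC2.not_nil
  rw [hq, Walk.cons_isCycle_iff] at hC2
  have hqlen : 2 ≤ q.length := by
    rw [hq] at h3; simpa using h3
  have hqrnil : ¬ q.reverse.Nil := by
    rw [Walk.not_nil_iff_lt_length, Walk.length_reverse]; omega
  have hbe : s(p, q.reverse.getVert 1) ∈ q.edges := by
    have := firstEdge_mem q.reverse hqrnil
    rwa [Walk.edges_reverse, List.mem_reverse] at this
  refine ⟨a, q.reverse.getVert 1, ?_, (hmem _).mp ?_, (hmem _).mp ?_⟩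
  · intro h; rw [← h] at hbe; exact hC2.2 hbe
  · rw [hq]; simp
  · rw [hq, Walk.edges_cons]; exact List.mem_cons_of_mem _ hbe

end LiftAux

/-- Let `G` be a finite simple graph, `T` a spanning tree of `G`, and `G̃` the lift of `G`
with respect to `T`. If `C̃` is a cycle in `G̃`, then in the subgraph of `G` whose edge set
is the set of `π`-projections of the edges of `C̃` (with their endpoints as vertices), every
vertex has degree at least `2`; consequently this subgraph contains a cycle of `G`. -/

theorem liftGraph_cycle_proj {V : Type*} [Fintype V] (G T : SimpleGraph V)
    (hT : T.IsTree) (hTG : T ≤ G)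
    (x : V × (nonTreeEdges G T → ZMod 2)) (C : (liftGraph G T).Walk x x)
    (hC : C.IsCycle) :
    (∀ v : V, (∃ e ∈ C.edges.map (edgeProj G T), v ∈ e) →
        2 ≤ (fromEdgeSet {e : Sym2 V | e ∈ C.edges.map (edgeProj G T)}).degree v) ∧
      ∃ (a : V) (c : G.Walk a a), c.IsCycle ∧
        ∀ e ∈ c.edges, e ∈ C.edges.map (edgeProj G T) := by
  set S : Set (Sym2 V) := {e : Sym2 V | e ∈ C.edges.map (edgeProj G T)} with hS
  set H : SimpleGraph V := fromEdgeSet S with hH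
  have inj : ∀ p a b : V × (nonTreeEdges G T → ZMod 2),
      (liftGraph G T).Adj p a → (liftGraph G T).Adj p b → a.1 = b.1 → a = b := by
    rintro p a b ⟨_, ha2⟩ ⟨_, hb2⟩ h
    refine Prod.ext h ?_
    rw [ha2, hb2, h]
  have deg2 : ∀ p : V × (nonTreeEdges G T → ZMod 2), p ∈ C.support →
      2 ≤ H.degree p.1 := by
    intro p hp
    obtain ⟨a, b, hab, hea, heb⟩ := LiftAux.cycle_two_edges hC hp
    have ha : (liftGraph G T).Adj p a := C.adj_of_mem_edges hea
    have hb : (liftGraph G T).Adj p b := C.adj_of_mem_edges heb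
    have hab1 : a.1 ≠ b.1 := fun h => hab (inj p a b ha hb h)
    have hHa : H.Adj p.1 a.1 := by
      rw [hH, fromEdgeSet_adj]
      exact ⟨List.mem_map.mpr ⟨s(p, a), hea, by simp [edgeProj]⟩, ha.1.ne⟩
    have hHb : H.Adj p.1 b.1 := by
      rw [hH, fromEdgeSet_adj]
      exact ⟨List.mem_map.mpr ⟨s(p, b), heb, by simp [edgeProj]⟩, hb.1.ne⟩
    have hsub : ({a.1, b.1} : Finset V) ⊆ H.neighborFinset p.1 := by
      intro y hy
      rcases Finset.mem_insert.mp hy with rfl | hy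
      · exact (H.mem_neighborFinset p.1 _).mpr hHa
      · rw [Finset.mem_singleton] at hy
        subst hy
        exact (H.mem_neighborFinset p.1 _).mpr hHb
    calc 2 = ({a.1, b.1} : Finset V).card := (Finset.card_pair hab1).symm
      _ ≤ (H.neighborFinset p.1).card := Finset.card_le_card hsub
      _ = H.degree p.1 := rfl
  have degpart : ∀ v : V, (∃ e ∈ C.edges.map (edgeProj G T), v ∈ e) →
      2 ≤ H.degree v := by
    rintro v ⟨e, he, hve⟩
    obtain ⟨e', he', rfl⟩ := List.mem_map.mp he
    revert he' hve
    induction e' using Sym2.ind with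
    | _ p q =>
      intro he' hve
      have : v = p.1 ∨ v = q.1 := by
        simpa [edgeProj, Sym2.map_pair_eq, Sym2.mem_iff] using hve
      rcases this with rfl | rfl
      · exact deg2 p (C.fst_mem_support_of_mem_edges he')
      · exact deg2 q (C.snd_mem_support_of_mem_edges he')
  refine ⟨degpart, ?_⟩
  have hle : H ≤ G := by
    intro v w hvw
    rw [hH, fromEdgeSet_adj] at hvw
    obtain ⟨hmem, hne⟩ := hvw
    obtain ⟨e', he', hpe⟩ := List.mem_map.mp hmem
    rw [← SimpleGraph.mem_edgeSet, ← hpe]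
    have hE := C.edges_subset_edgeSet he'
    revert hE
    induction e' using Sym2.ind with
    | _ a b =>
      intro hE
      rw [SimpleGraph.mem_edgeSet] at hE
      simpa [edgeProj, Sym2.map_pair_eq, SimpleGraph.mem_edgeSet] using hE.1
  have hCnil : ¬ C.Nil := hC.not_nil
  have hadj0 : (liftGraph G T).Adj x (C.getVert 1) := C.adj_snd hCnil
  have hS0 : s(x.1, (C.getVert 1).1) ∈ C.edges.map (edgeProj G T) :=
    List.mem_map.mpr ⟨s(x, C.getVert 1), LiftAux.firstEdge_mem C hCnil, by simp [edgeProj]⟩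
  have hH0 : H.Adj x.1 (C.getVert 1).1 := by
    rw [hH, fromEdgeSet_adj]; exact ⟨hS0, hadj0.1.ne⟩
  set L : Set ℕ := {n | ∃ (u v : V) (w : H.Walk u v), w.IsPath ∧ w.length = n} with hL
  have hLfin : L.Finite := (Set.finite_Iio (Fintype.card V)).subset (by
    rintro n ⟨u, v, w, hw, rfl⟩
    exact hw.length_lt)
  have h1L : (1 : ℕ) ∈ L := by
    refine ⟨x.1, (C.getVert 1).1, Walk.cons hH0 Walk.nil, ?_, by simp⟩
    rw [Walk.cons_isPath_iff]
    exact ⟨Walk.IsPath.nil, by simp [hH0.ne]⟩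
  obtain ⟨N, hNL, hNmax⟩ := Set.exists_max_image L id hLfin ⟨1, h1L⟩
  obtain ⟨u, v, w, hw, hwlen⟩ := hNL
  have hN1 : (1 : ℕ) ≤ N := hNmax 1 h1L
  have hwnil : ¬ w.Nil := by rw [Walk.not_nil_iff_lt_length]; omega
  have hue : s(u, w.getVert 1) ∈ H.edgeSet :=
    w.edges_subset_edgeSet (LiftAux.firstEdge_mem w hwnil)
  have hedge : H.edgeSet ⊆ S := by
    rw [hH]
    intro e he
    rw [edgeSet_fromEdgeSet] at he
    exact he.1
  have huS : s(u, w.getVert 1) ∈ C.edges.map (edgeProj G T) := hedge hue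
  have hudeg : 2 ≤ H.degree u :=
    degpart u ⟨s(u, w.getVert 1), huS, Sym2.mem_mk_left u _⟩
  have hcard : 1 < (H.neighborFinset u).card := lt_of_lt_of_le one_lt_two hudeg
  obtain ⟨y, hy, hyne⟩ := Finset.exists_mem_ne hcard (w.getVert 1)
  have hyadj : H.Adj u y := (H.mem_neighborFinset u y).mp hy
  by_cases hys : y ∈ w.support
  · have hqpath : (w.takeUntil y hys).IsPath := hw.takeUntil hys
    have hnotin : s(u, y) ∉ (w.takeUntil y hys).edges := by
      intro hcon
      exact hyne (LiftAux.path_start_edge hw (Walk.edges_takeUntil_subset w hys hcon))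
    have hcyc : (Walk.cons hyadj (w.takeUntil y hys).reverse).IsCycle := by
      rw [Walk.cons_isCycle_iff]
      refine ⟨hqpath.reverse, ?_⟩
      rw [Walk.edges_reverse, List.mem_reverse]
      exact hnotin
    refine ⟨u, (Walk.cons hyadj (w.takeUntil y hys).reverse).mapLe hle,
      hcyc.mapLe hle, ?_⟩
    intro e he
    rw [Walk.mapLe, Walk.edges_map] at he
    obtain ⟨e', he', rfl⟩ := List.mem_map.mp he
    have heH : e' ∈ H.edgeSet :=
      (Walk.cons hyadj (w.takeUntil y hys).reverse).edges_subset_edgeSet he'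
    have heS : e' ∈ C.edges.map (edgeProj G T) := hedge heH
    simpa [Hom.ofLE_apply, Sym2.map_id'] using heS
  · exfalso
    have hmem : N + 1 ∈ L := by
      refine ⟨y, v, Walk.cons hyadj.symm w, ?_, by simp [hwlen]⟩
      rw [Walk.cons_isPath_iff]
      exact ⟨hw, hys⟩
    have := hNmax _ hmem
    simp only [id] at this
    omega


end
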